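/- Strict monotonicity implies a unique fixed point and exponential attraction: under the hypotheses that A : ℝ^d → ℝ^d is Lipschitz and 2⟨x − y, A(x) − A(y)⟩ ≤ −λ|x − y|² for all x, y with λ > 0, the flow φ(·,t) of X' = A(X) has a unique stationary point x* (with A(x*) = 0) and |φ(x,t) − x*| ≤ e^{−λt/2}|x − x*| for all x ∈ ℝ^d and t ≥ 0. -/

import Mathlib

open scoped RealInnerProductSpace

/-!
Along two solutions `u`, `v` of `X' = A(X)`, monotonicity gives
`(d/ds) ‖u - v‖² ≤ -λ ‖u - v‖²`, so `e^{λs} ‖u s - v s‖²` is antitone: solutions approach each other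
at rate `e^{-λt/2}`. Hence solutions are unique, `φ` is a semiflow, and the time-one map `φ(·, 1)` is
a contraction. Its fixed point `x*` is a fixed point of every `φ(·, s)` (these commute with
`φ(·, 1)`), so `A x* = 0`; comparing an arbitrary solution with the constant solution `x*` gives
the attraction estimate, and uniqueness of the zero is immediate from monotonicity.
-/

def IsStronglyDissipative {E : Type*} [NormedAddCommGroup E] [InnerProductSpace ℝ E]
    (A : E → E) (lam : ℝ) : Prop :=
  ∀ x y, 2 * ⟪x - y, A x - A y⟫ ≤ -lam * ‖x - y‖ ^ 2

namespace IsStronglyDissipative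

variable {E : Type*} [NormedAddCommGroup E] [InnerProductSpace ℝ E] {A : E → E} {lam : ℝ}
  {φ : E → ℝ → E}

theorem antitone_exp_mul_norm_sub_sq
    (hA : IsStronglyDissipative A lam) {u v : ℝ → E}
    (hu : ∀ s, HasDerivAt u (A (u s)) s) (hv : ∀ s, HasDerivAt v (A (v s)) s) :
    Antitone fun s => Real.exp (lam * s) * ‖u s - v s‖ ^ 2 := by
  have hderiv : ∀ s, HasDerivAt (fun s => Real.exp (lam * s) * ‖u s - v s‖ ^ 2)
      (Real.exp (lam * s) * (lam * ‖u s - v s‖ ^ 2 + 2 * ⟪u s - v s, A (u s) - A (v s)⟫)) s := by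
    intro s
    have hexp : HasDerivAt (fun s => Real.exp (lam * s)) (Real.exp (lam * s) * lam) s := by
      simpa using ((hasDerivAt_id s).const_mul lam).exp
    exact (hexp.mul ((hu s).sub (hv s)).norm_sq).congr_deriv (by rw [Pi.sub_apply]; ring)
  refine antitone_of_deriv_nonpos (fun s => (hderiv s).differentiableAt) fun s => ?_
  rw [(hderiv s).deriv]
  exact mul_nonpos_of_nonneg_of_nonpos (Real.exp_pos _).le (by linarith [hA (u s) (v s)])

theorem norm_sub_le_exp_mul_norm_sub
    (hA : IsStronglyDissipative A lam) {u v : ℝ → E}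
    (hu : ∀ s, HasDerivAt u (A (u s)) s) (hv : ∀ s, HasDerivAt v (A (v s)) s)
    {t : ℝ} (ht : 0 ≤ t) :
    ‖u t - v t‖ ≤ Real.exp (-(lam * t) / 2) * ‖u 0 - v 0‖ := by
  have hdecay := hA.antitone_exp_mul_norm_sub_sq hu hv ht
  simp only [mul_zero, Real.exp_zero, one_mul] at hdecay
  have hsq : ‖u t - v t‖ ^ 2 ≤ (Real.exp (-(lam * t) / 2) * ‖u 0 - v 0‖) ^ 2 := by
    have hexp : Real.exp (-(lam * t) / 2) ^ 2 * Real.exp (lam * t) = 1 := by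
      rw [← Real.exp_nat_mul, ← Real.exp_add]; ring_nf; exact Real.exp_zero
    calc ‖u t - v t‖ ^ 2
        = Real.exp (-(lam * t) / 2) ^ 2 * (Real.exp (lam * t) * ‖u t - v t‖ ^ 2) := by
          rw [← mul_assoc, hexp, one_mul]
      _ ≤ Real.exp (-(lam * t) / 2) ^ 2 * ‖u 0 - v 0‖ ^ 2 := by gcongr
      _ = _ := (mul_pow _ _ _).symm
  exact (sq_le_sq₀ (norm_nonneg _) (by positivity)).mp hsq

theorem eq_of_apply_eq_zero (hA : IsStronglyDissipative A lam) (hlam : 0 < lam) {x y : E}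
    (hx : A x = 0) (hy : A y = 0) : x = y := by
  have h := hA x y
  rw [hx, hy, sub_zero, inner_zero_right, mul_zero] at h
  have hsq : ‖x - y‖ ^ 2 = 0 := le_antisymm (by nlinarith) (sq_nonneg _)
  simpa [sub_eq_zero] using hsq

theorem flow_add (hA : IsStronglyDissipative A lam)
    (hφ0 : ∀ x, φ x 0 = x) (hφ : ∀ x t, HasDerivAt (φ x) (A (φ x t)) t)
    (x : E) (t : ℝ) {s : ℝ} (hs : 0 ≤ s) : φ x (t + s) = φ (φ x t) s := by
  have hshift : ∀ r, HasDerivAt (fun r => φ x (t + r)) (A (φ x (t + r))) r :=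
    fun r => (hφ x (t + r)).comp_const_add t r
  simpa [hφ0, sub_eq_zero] using hA.norm_sub_le_exp_mul_norm_sub hshift (hφ (φ x t)) hs

theorem lipschitzWith_flow (hA : IsStronglyDissipative A lam)
    (hφ0 : ∀ x, φ x 0 = x) (hφ : ∀ x t, HasDerivAt (φ x) (A (φ x t)) t) {t : ℝ} (ht : 0 ≤ t) :
    LipschitzWith (Real.exp (-(lam * t) / 2)).toNNReal (φ · t) := by
  refine LipschitzWith.of_dist_le_mul fun x y => ?_
  rw [Real.coe_toNNReal _ (Real.exp_pos _).le, dist_eq_norm, dist_eq_norm]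
  simpa [hφ0] using hA.norm_sub_le_exp_mul_norm_sub (hφ x) (hφ y) ht

theorem contractingWith_flow_one (hA : IsStronglyDissipative A lam) (hlam : 0 < lam)
    (hφ0 : ∀ x, φ x 0 = x) (hφ : ∀ x t, HasDerivAt (φ x) (A (φ x t)) t) :
    ContractingWith (Real.exp (-(lam * 1) / 2)).toNNReal (φ · 1) :=
  ⟨Real.toNNReal_lt_one.mpr (Real.exp_lt_one_iff.mpr (by linarith)),
    hA.lipschitzWith_flow hφ0 hφ zero_le_one⟩

theorem exists_apply_eq_zero [CompleteSpace E] (hA : IsStronglyDissipative A lam)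
    (hlam : 0 < lam) (hφ0 : ∀ x, φ x 0 = x) (hφ : ∀ x t, HasDerivAt (φ x) (A (φ x t)) t) :
    ∃ x, A x = 0 := by
  have hf := hA.contractingWith_flow_one hlam hφ0 hφ
  set xstar := ContractingWith.fixedPoint _ hf
  have hfix : φ xstar 1 = xstar := hf.fixedPoint_isFixedPt
  have hstat : ∀ s, 0 ≤ s → φ xstar s = xstar := by
    intro s hs
    refine hf.fixedPoint_unique' ?_ hfix
    change φ (φ xstar s) 1 = φ xstar s
    rw [← hA.flow_add hφ0 hφ xstar s zero_le_one, add_comm,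
      hA.flow_add hφ0 hφ xstar 1 hs, hfix]
  have hderiv : HasDerivAt (φ xstar) 0 1 := by
    refine (hasDerivAt_const 1 xstar).congr_of_eventuallyEq ?_
    filter_upwards [Ioi_mem_nhds one_pos] with s hs using hstat s hs.le
  exact ⟨xstar, hstat 1 zero_le_one ▸ (hφ xstar 1).unique hderiv⟩

end IsStronglyDissipative

theorem unique_fixed_point_and_exponential_attraction_general (d : ℕ)
    (A : EuclideanSpace ℝ (Fin d) → EuclideanSpace ℝ (Fin d))
    (lam : ℝ) (hlam : 0 < lam)
    (hmono : ∀ x y : EuclideanSpace ℝ (Fin d),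
      2 * ⟪x - y, A x - A y⟫ ≤ -lam * ‖x - y‖ ^ 2)
    (φ : EuclideanSpace ℝ (Fin d) → ℝ → EuclideanSpace ℝ (Fin d))
    (hφ0 : ∀ x, φ x 0 = x)
    (hφ : ∀ x t, HasDerivAt (φ x) (A (φ x t)) t) :
    ∃ xstar : EuclideanSpace ℝ (Fin d), A xstar = 0 ∧
      (∀ y, A y = 0 → y = xstar) ∧
      ∀ (x : EuclideanSpace ℝ (Fin d)) (t : ℝ), 0 ≤ t →
        ‖φ x t - xstar‖ ≤ Real.exp (-(lam * t) / 2) * ‖x - xstar‖ := by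
  have hA : IsStronglyDissipative A lam := hmono
  obtain ⟨xstar, hzero⟩ := hA.exists_apply_eq_zero hlam hφ0 hφ
  refine ⟨xstar, hzero, fun y hy => hA.eq_of_apply_eq_zero hlam hy hzero, fun x t ht => ?_⟩
  have hstationary : ∀ s, HasDerivAt (fun _ : ℝ => xstar) (A xstar) s :=
    fun s => hzero ▸ hasDerivAt_const s xstar
  simpa [hφ0] using hA.norm_sub_le_exp_mul_norm_sub (hφ x) hstationary ht

/-- Strict monotonicity implies a unique fixed point and exponential attraction: if
`A : ℝ^d → ℝ^d` is Lipschitz and `2⟪x − y, A x − A y⟫ ≤ −λ|x − y|²` for all `x, y` with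
`λ > 0`, then the flow `φ` of `X' = A(X)` has a unique stationary point `x*` (with
`A(x*) = 0`) and `|φ(x,t) − x*| ≤ e^{−λt/2}|x − x*|` for all `x` and `t ≥ 0`. -/
theorem unique_fixed_point_and_exponential_attraction (d : ℕ)
    (A : EuclideanSpace ℝ (Fin d) → EuclideanSpace ℝ (Fin d))
    (Klip : NNReal) (hlip : LipschitzWith Klip A)
    (lam : ℝ) (hlam : 0 < lam)
    (hmono : ∀ x y : EuclideanSpace ℝ (Fin d),
      2 * ⟪x - y, A x - A y⟫ ≤ -lam * ‖x - y‖ ^ 2)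
    (φ : EuclideanSpace ℝ (Fin d) → ℝ → EuclideanSpace ℝ (Fin d))
    (hφ0 : ∀ x, φ x 0 = x)
    (hφ : ∀ x t, HasDerivAt (φ x) (A (φ x t)) t) :
    ∃ xstar : EuclideanSpace ℝ (Fin d), A xstar = 0 ∧
      (∀ y, A y = 0 → y = xstar) ∧
      ∀ (x : EuclideanSpace ℝ (Fin d)) (t : ℝ), 0 ≤ t →
        ‖φ x t - xstar‖ ≤ Real.exp (-(lam * t) / 2) * ‖x - xstar‖ :=
  unique_fixed_point_and_exponential_attraction_general d A lam hlam hmono φ hφ0 hφ
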